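/- If 1 − |μ_n| ≤ n + d ≤ |μ_n| − 1, then there exists w ∈ W^P with ℓ(w) = n such that w^{-1} ⋅ (d × μ) is dominant. (This is the existence part of the implication (2) ⇒ (3) of the combinatorial lemma.) -/

import Mathlib

/-- The Weyl group of type `D_N`: pairs `(σ, ε)` of a permutation of `{1, …, N}` and a
sign vector `ε : {1, …, N} → {±1}` with `∏ i, ε i = 1`. -/
def WeylD (N : ℕ) : Type :=
  {w : Equiv.Perm (Fin N) × (Fin N → ℤ) // (∀ i, w.2 i = 1 ∨ w.2 i = -1) ∧ ∏ i, w.2 i = 1}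

namespace WeylD

/-- The `ℤ`-linear action of `w = (σ, ε)` on `ℤ^N`: `(w · λ)_i = ε_i · λ_{σ⁻¹ i}`. -/
def act {N : ℕ} (w : WeylD N) (lam : Fin N → ℤ) : Fin N → ℤ :=
  fun i => w.1.2 i * lam (w.1.1⁻¹ i)

/-- The inverse of a Weyl group element: `(σ, ε)⁻¹ = (σ⁻¹, ε ∘ σ)`. -/
def inv {N : ℕ} (w : WeylD N) : WeylD N :=
  ⟨(w.1.1⁻¹, fun i => w.1.2 (w.1.1 i)), by
    obtain ⟨h1, h2⟩ := w.2
    exact ⟨fun i => h1 _, by rw [Equiv.prod_comp w.1.1 w.1.2]; exact h2⟩⟩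

end WeylD

/-- The positive roots of the root system of type `D_N`:
`{e_i - e_j : i < j} ∪ {e_i + e_j : i < j}`. -/
def PosRootsD (N : ℕ) : Set (Fin N → ℤ) :=
  {α | ∃ i j : Fin N, i < j ∧
    (α = Pi.single i 1 - Pi.single j 1 ∨ α = Pi.single i 1 + Pi.single j 1)}

/-- The length of `w`: the number of positive roots `α` with `w(α) ∈ -Φ⁺`. -/
noncomputable def WeylD.length {N : ℕ} (w : WeylD N) : ℕ :=
  Set.ncard {α | α ∈ PosRootsD N ∧ -(w.act α) ∈ PosRootsD N}

/-- The half sum of positive roots `ρ = (N-1, N-2, …, 1, 0)` of type `D_N`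
(for `N = n+1` this is `(n, n-1, …, 1, 0)`). -/
def rhoD (N : ℕ) : Fin N → ℤ := fun i => (N : ℤ) - 1 - (i : ℕ)

/-- The dot action `w ⋅ λ = w(λ + ρ) - ρ`. -/
def WeylD.dot {N : ℕ} (w : WeylD N) (lam : Fin N → ℤ) : Fin N → ℤ :=
  w.act (lam + rhoD N) - rhoD N

/-- `λ ∈ ℤ^{n+1}` is dominant if `λ_1 ≥ λ_2 ≥ … ≥ λ_n ≥ |λ_{n+1}|`. -/
def DominantD (n : ℕ) (lam : Fin (n + 1) → ℤ) : Prop :=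
  (∀ i j : Fin (n + 1), i ≤ j → (j : ℕ) < n → lam j ≤ lam i) ∧
  (∀ i : Fin (n + 1), (i : ℕ) < n → |lam (Fin.last n)| ≤ lam i)

/-- The set of Kostant representatives `W^P` for the maximal parabolic `P` of
`SO(n+1,n+1)` obtained by deleting the first simple root: those `w` such that
`w⁻¹(α) ∈ Φ⁺` for every positive root `α` supported on the coordinates `{2, …, n+1}`
(i.e. with vanishing first coordinate). -/
def KostantWP (n : ℕ) : Set (WeylD (n + 1)) :=
  {w | ∀ α ∈ PosRootsD (n + 1), α 0 = 0 → w.inv.act α ∈ PosRootsD (n + 1)}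

/-! The witness is `w = (σ, ε)` with `σ : i ↦ i + 1` the cyclic rotation and `ε` equal to a sign
`s` at the first and last coordinates and to `1` elsewhere, where `s μ_n = |μ_n|`. Then
`w⁻¹ ⋅ (d × μ) = (μ_1 - 1, …, μ_{n-1} - 1, |μ_n| - 1, s (n + d))`, which is dominant exactly when
`|n + d| ≤ |μ_n| - 1`. Since `w⁻¹` sends `e_j` to `e_{j-1}` for `2 ≤ j ≤ n` and `e_{n+1}` to
`s e_n`, it keeps the positive roots of the Levi positive; as `w(e_{n+1}) = s e_1`, the
inversions of `w` are the `n` roots `e_k - s e_{n+1}`, `k ≤ n`. -/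

lemma mem_posRootsD_iff {N : ℕ} {α : Fin N → ℤ} :
    α ∈ PosRootsD N ↔ ∃ i j : Fin N, ∃ c : ℤ, i < j ∧ IsUnit c ∧
      α = Pi.single i 1 + Pi.single j c := by
  constructor
  · rintro ⟨i, j, hij, rfl | rfl⟩
    · exact ⟨i, j, -1, hij, isUnit_one.neg, by rw [sub_eq_add_neg, Pi.single_neg]⟩
    · exact ⟨i, j, 1, hij, isUnit_one, rfl⟩
  · rintro ⟨i, j, c, hij, hc, rfl⟩
    rcases Int.isUnit_iff.mp hc with rfl | rfl
    · exact ⟨i, j, hij, Or.inr rfl⟩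
    · exact ⟨i, j, hij, Or.inl (by rw [sub_eq_add_neg, Pi.single_neg])⟩

lemma single_add_single_mem_posRootsD_iff {N : ℕ} {a b : Fin N} (hab : a < b) {c d : ℤ}
    (hd : IsUnit d) :
    Pi.single a c + Pi.single b d ∈ PosRootsD N ↔ c = 1 := by
  rw [mem_posRootsD_iff]
  constructor
  · rintro ⟨i, j, e, hij, he, h⟩
    have supp : ∀ k, (Pi.single i 1 + Pi.single j e : Fin N → ℤ) k ≠ 0 →
        k = a ∨ k = b := by
      intro k hk
      rw [← h] at hk
      by_contra! hne
      simp [hne.1, hne.2] at hk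
    have hi := supp i (by simp [hij.ne'])
    have hj := supp j (by simp [hij.ne', he.ne_zero])
    obtain rfl : i = a := by
      rcases hi with rfl | rfl <;> rcases hj with rfl | rfl <;> order
    simpa [hij.ne, hab.ne'] using congrFun h i
  · rintro rfl
    exact ⟨a, b, d, hab, hd, rfl⟩

namespace WeylD

variable {N : ℕ} (w : WeylD N)

lemma act_add (x y : Fin N → ℤ) : w.act (x + y) = w.act x + w.act y := by
  funext k
  simp only [act, Pi.add_apply, mul_add]

lemma act_single (i : Fin N) (c : ℤ) :
    w.act (Pi.single i c) = Pi.single (w.1.1 i) (w.1.2 (w.1.1 i) * c) := by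
  funext k
  rcases eq_or_ne k (w.1.1 i) with rfl | hk
  · simp [act]
  · have : w.1.1⁻¹ k ≠ i := fun h => hk (by rw [← h]; simp)
    simp only [act, Pi.single_apply, if_neg hk, if_neg this, mul_zero]

lemma inv_act_apply (x : Fin N → ℤ) (k : Fin N) :
    w.inv.act x k = w.1.2 (w.1.1 k) * x (w.1.1 k) := by
  simp [inv, act]

lemma inv_act_single (i : Fin N) (c : ℤ) :
    w.inv.act (Pi.single i c) = Pi.single (w.1.1⁻¹ i) (w.1.2 i * c) := by
  rw [act_single]
  simp [inv]

lemma neg_act_single_add_single (i j : Fin N) (c : ℤ) :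
    -w.act (Pi.single i 1 + Pi.single j c) =
      Pi.single (w.1.1 i) (-w.1.2 (w.1.1 i)) + Pi.single (w.1.1 j) (-(w.1.2 (w.1.1 j) * c)) := by
  rw [act_add, act_single, act_single, neg_add, ← Pi.single_neg, ← Pi.single_neg, mul_one]

end WeylD

def rotationSign (n : ℕ) (s : ℤ) (i : Fin (n + 1)) : ℤ :=
  if i = 0 ∨ i = Fin.last n then s else 1

lemma rotationSign_zero {n : ℕ} (s : ℤ) : rotationSign n s 0 = s := if_pos (Or.inl rfl)

lemma rotationSign_succ {n : ℕ} (s : ℤ) (k : Fin n) :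
    rotationSign n s k.succ = if (k : ℕ) + 1 = n then s else 1 := by
  simp [rotationSign, Fin.ext_iff]

lemma isUnit_rotationSign {n : ℕ} {s : ℤ} (hs : IsUnit s) (i : Fin (n + 1)) :
    IsUnit (rotationSign n s i) := by
  unfold rotationSign
  split_ifs
  exacts [hs, isUnit_one]

lemma rotationSign_succ_of_lt {n : ℕ} (s : ℤ) {k l : Fin n} (hkl : k < l) :
    rotationSign n s k.succ = 1 := by
  rw [rotationSign_succ, if_neg (by omega)]

def WeylD.signedRotation (n : ℕ) [NeZero n] {s : ℤ} (hs : IsUnit s) : WeylD (n + 1) :=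
  ⟨(finRotate (n + 1), rotationSign n s),
    fun i => Int.isUnit_iff.mp (isUnit_rotationSign hs i),
    by
      rw [Fintype.prod_eq_mul 0 (Fin.last n) Fin.last_pos'.ne
        fun i hi => by simp [rotationSign, hi]]
      simp [rotationSign, Int.isUnit_mul_self hs]⟩

namespace WeylD.signedRotation

variable {n : ℕ} [NeZero n] {s : ℤ} (hs : IsUnit s)

lemma perm_castSucc (k : Fin n) : (signedRotation n hs).1.1 k.castSucc = k.succ := by
  simp [signedRotation, finRotate_apply, Fin.coeSucc_eq_succ]

lemma perm_last : (signedRotation n hs).1.1 (Fin.last n) = 0 := finRotate_last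

lemma perm_symm_succ (k : Fin n) : (signedRotation n hs).1.1⁻¹ k.succ = k.castSucc :=
  (Equiv.symm_apply_eq _).mpr (perm_castSucc hs k).symm

lemma sign_apply (i : Fin (n + 1)) : (signedRotation n hs).1.2 i = rotationSign n s i := rfl

theorem mem_kostantWP : signedRotation n hs ∈ KostantWP n := by
  intro α hα hα0
  obtain ⟨i, j, c, hij, hc, rfl⟩ := mem_posRootsD_iff.mp hα
  have hj0 : j ≠ 0 := (Fin.zero_le i).trans_lt hij |>.ne'
  have hi0 : i ≠ 0 := by
    rintro rfl
    simp [hj0.symm] at hα0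
  obtain ⟨k, rfl⟩ := Fin.exists_succ_eq.mpr hi0
  obtain ⟨l, rfl⟩ := Fin.exists_succ_eq.mpr hj0
  have hkl : k < l := Fin.succ_lt_succ_iff.mp hij
  rw [act_add, inv_act_single, inv_act_single, perm_symm_succ, perm_symm_succ, sign_apply,
    sign_apply, rotationSign_succ_of_lt s hkl]
  exact (single_add_single_mem_posRootsD_iff (Fin.castSucc_lt_castSucc_iff.mpr hkl)
    ((isUnit_rotationSign hs l.succ).mul hc)).mpr (one_mul 1)

lemma inversions_eq :
    {α | α ∈ PosRootsD (n + 1) ∧ -(signedRotation n hs).act α ∈ PosRootsD (n + 1)} =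
      Set.range fun k : Fin n => Pi.single k.castSucc 1 + Pi.single (Fin.last n) (-s) := by
  have hss : s * s = 1 := Int.isUnit_mul_self hs
  ext α
  simp only [Set.mem_ofPred_eq, Set.mem_range]
  constructor
  · rintro ⟨hα, hwα⟩
    obtain ⟨i, j, c, hij, hc, rfl⟩ := mem_posRootsD_iff.mp hα
    obtain ⟨k, rfl⟩ := Fin.exists_castSucc_eq.mpr (hij.trans_le (Fin.le_last j)).ne
    rw [neg_act_single_add_single, perm_castSucc, sign_apply, sign_apply] at hwα
    induction j using Fin.lastCases with
    | last =>
      rw [perm_last, rotationSign_zero, add_comm (Pi.single _ _),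
        single_add_single_mem_posRootsD_iff (Fin.succ_pos k) (isUnit_rotationSign hs _).neg] at hwα
      exact ⟨k, by rw [show c = -s by linear_combination -c * hss - s * hwα]⟩
    | cast l =>
      have hkl : k < l := Fin.castSucc_lt_castSucc_iff.mp hij
      rw [perm_castSucc, rotationSign_succ_of_lt s hkl, single_add_single_mem_posRootsD_iff
        (Fin.succ_lt_succ_iff.mpr hkl) ((isUnit_rotationSign hs _).mul hc).neg] at hwα
      norm_num at hwα
  · rintro ⟨k, rfl⟩
    refine ⟨(single_add_single_mem_posRootsD_iff (Fin.castSucc_lt_last k) hs.neg).mpr rfl, ?_⟩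
    rw [neg_act_single_add_single, perm_castSucc, perm_last, sign_apply, sign_apply,
      rotationSign_zero, add_comm (Pi.single _ _),
      single_add_single_mem_posRootsD_iff (Fin.succ_pos k) (isUnit_rotationSign hs _).neg]
    linear_combination hss

theorem length_eq : (signedRotation n hs).length = n := by
  rw [length, inversions_eq, Set.ncard_range_of_injective, Nat.card_eq_fintype_card,
    Fintype.card_fin]
  intro k l h
  by_contra hkl
  simpa [Pi.single_apply, hkl, Fin.castSucc_ne_last] using congrFun h k.castSucc

theorem inv_dot_cons (d : ℤ) (μ : Fin n → ℤ) :
    (signedRotation n hs).inv.dot (Fin.cons d μ) =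
      Fin.snoc (fun k => rotationSign n s k.succ * μ k - 1) (s * (d + n)) := by
  funext m
  induction m using Fin.lastCases with
  | last =>
    simp [dot, inv_act_apply, perm_last, sign_apply, rotationSign_zero, rhoD]
  | cast k =>
    simp only [dot, Pi.sub_apply, inv_act_apply, perm_castSucc, sign_apply, Fin.snoc_castSucc,
      Pi.add_apply, Fin.cons_succ, rotationSign_succ, rhoD, Fin.val_succ, Fin.val_castSucc]
    split_ifs with hk
    · have hk' : (n : ℤ) = k + 1 := by exact_mod_cast hk.symm
      push_cast
      linear_combination (s - 1) * hk'
    · push_cast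
      ring

end WeylD.signedRotation

lemma dominantD_snoc_iff {n : ℕ} {x : Fin n → ℤ} {t : ℤ} :
    DominantD n (Fin.snoc x t) ↔ Antitone x ∧ ∀ k, |t| ≤ x k := by
  constructor
  · rintro ⟨hanti, hlast⟩
    refine ⟨fun a b hab => ?_, fun k => ?_⟩
    · simpa using hanti a.castSucc b.castSucc (Fin.castSucc_le_castSucc_iff.mpr hab) b.isLt
    · simpa using hlast k.castSucc k.isLt
  · rintro ⟨hanti, hlast⟩
    refine ⟨fun i j hij hj => ?_, fun i hi => ?_⟩
    · obtain ⟨j, rfl⟩ := Fin.exists_castSucc_eq.mpr (Fin.val_ne_iff.mp hj.ne)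
      obtain ⟨i, rfl⟩ := Fin.exists_castSucc_eq.mpr (hij.trans_lt (Fin.castSucc_lt_last j)).ne
      simpa using hanti (Fin.castSucc_le_castSucc_iff.mp hij)
    · obtain ⟨i, rfl⟩ := Fin.exists_castSucc_eq.mpr (Fin.val_ne_iff.mp hi.ne)
      simpa using hlast i

section DominantWeight

open Function

variable {n : ℕ} {μ : Fin n → ℤ} {m : Fin n}

lemma abs_le_update_abs (hlast : ∀ i : Fin n, (i : ℕ) + 1 < n → |μ m| ≤ μ i)
    (hm : (m : ℕ) + 1 = n) (k : Fin n) : |μ m| ≤ update μ m |μ m| k := by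
  rcases eq_or_ne k m with rfl | hk
  · simp
  · rw [update_of_ne hk]
    exact hlast k (by have := Fin.val_ne_iff.mpr hk; omega)

lemma antitone_update_abs (hdec : ∀ i j : Fin n, i ≤ j → (j : ℕ) + 1 < n → μ j ≤ μ i)
    (hlast : ∀ i : Fin n, (i : ℕ) + 1 < n → |μ m| ≤ μ i) (hm : (m : ℕ) + 1 = n) :
    Antitone (update μ m |μ m|) := by
  intro i j hij
  rcases eq_or_ne j m with rfl | hj
  · simpa using abs_le_update_abs hlast hm i
  · have hjm : (j : ℕ) + 1 < n := by have := Fin.val_ne_iff.mpr hj; omega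
    have hi : i ≠ m := by rintro rfl; exact absurd (Fin.le_def.mp hij) (by omega)
    rw [update_of_ne hj, update_of_ne hi]
    exact hdec i j hij hjm

lemma rotationSign_succ_mul_eq_update_abs {s : ℤ} (hsm : s * μ m = |μ m|)
    (hm : (m : ℕ) + 1 = n) (k : Fin n) :
    rotationSign n s k.succ * μ k = update μ m |μ m| k := by
  rcases eq_or_ne k m with rfl | hk
  · rw [rotationSign_succ, if_pos hm, hsm, update_self]
  · rw [rotationSign_succ, if_neg (by have := Fin.val_ne_iff.mpr hk; omega), one_mul,
      update_of_ne hk]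

end DominantWeight

/-- Existence part of the implication (2) ⇒ (3) of the combinatorial lemma:
if `1 - |μ_n| ≤ n + d ≤ |μ_n| - 1`, then there is a Kostant representative
`w ∈ W^P` of length `n = dim(N_P)/2` such that `w⁻¹ ⋅ (d × μ)` is dominant. -/
theorem range_implies_kostant (n : ℕ) (hn : 2 ≤ n)
    (μ : Fin n → ℤ)
    (hdec : ∀ i j : Fin n, i ≤ j → (j : ℕ) + 1 < n → μ j ≤ μ i)
    (hlast : ∀ i : Fin n, (i : ℕ) + 1 < n → |μ ⟨n - 1, by omega⟩| ≤ μ i)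
    (d : ℤ)
    (h1 : 1 - |μ ⟨n - 1, by omega⟩| ≤ (n : ℤ) + d)
    (h2 : (n : ℤ) + d ≤ |μ ⟨n - 1, by omega⟩| - 1) :
    ∃ w : WeylD (n + 1), w ∈ KostantWP n ∧ w.length = n ∧
      DominantD n (w.inv.dot (Fin.cons d μ)) := by
  have : NeZero n := ⟨by omega⟩
  set m : Fin n := ⟨n - 1, by omega⟩
  have hm : (m : ℕ) + 1 = n := by simp only [m]; omega
  obtain ⟨s, hs, hsm⟩ : ∃ s : ℤ, IsUnit s ∧ s * μ m = |μ m| := by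
    rcases abs_choice (μ m) with h | h
    · exact ⟨1, isUnit_one, by rw [h, one_mul]⟩
    · exact ⟨-1, isUnit_one.neg, by rw [h, neg_one_mul]⟩
  refine ⟨WeylD.signedRotation n hs, WeylD.signedRotation.mem_kostantWP hs,
    WeylD.signedRotation.length_eq hs, ?_⟩
  rw [WeylD.signedRotation.inv_dot_cons, dominantD_snoc_iff]
  simp only [rotationSign_succ_mul_eq_update_abs hsm hm]
  refine ⟨fun i j hij => sub_le_sub_right (antitone_update_abs hdec hlast hm hij) 1,
    fun k => ?_⟩
  have hbound := abs_le_update_abs hlast hm k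
  rw [abs_mul, Int.isUnit_iff_abs_eq.mp hs, one_mul, abs_le]
  constructor <;> linarith
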